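/- arXiv:2305.08362 — 5 statements merged into one kernel-verified Lean document; each statement's English description precedes it below -/
import Mathlib

section
/- Let m > 0 and f(r) = (1 - 2m/r)/r² for r > 2m, and for b > 3√3·m let r_p(b) be the unique root of f(r) = 1/b² in (3m, ∞). Then r_p(b)/b → 1 as b → ∞; that is, for large impact parameter the periastron radius is asymptotically equal to the impact parameter, corresponding to an almost straight-line orbit. -/
/-!
Clearing denominators, `f r = 1 / b ^ 2` becomes the cubic `b² (r - 2m) = r³`, i.e.
`r (b - r) (b + r) = 2 m b²`. Hence `r < b`, and on `r > 3m` also `b ≤ 3r`, so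
`b - r = 2 m b² / (r (b + r)) ≤ 2 m b / r ≤ 6m`. A radius within a bounded distance of `b`
is asymptotic to `b`.
-/

open Filter Topology Asymptotics

theorem tendsto_div_self_atTop_of_abs_sub_le {g : ℝ → ℝ} {C : ℝ}
    (h : ∀ᶠ x in atTop, |g x - x| ≤ C) : Tendsto (fun x => g x / x) atTop (𝓝 1) := by
  have hbounded : (fun x => g x - x) =O[atTop] (fun _ => (1 : ℝ)) :=
    IsBigO.of_bound C (h.mono fun x hx => by simpa using hx)
  have hequiv : g ~[atTop] id := hbounded.trans_isLittleO (isLittleO_const_id_atTop 1)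
  exact (isEquivalent_iff_tendsto_one (eventually_ne_atTop 0)).mp hequiv

section PeriastronCubic

variable {m r b : ℝ}

theorem periastron_cubic_of_eq (hr : r ≠ 0) (hb : b ≠ 0)
    (h : (1 - 2 * m / r) / r ^ 2 = 1 / b ^ 2) : b ^ 2 * (r - 2 * m) = r ^ 3 := by
  field_simp at h
  linear_combination h

theorem lt_of_periastron_cubic (hm : 0 < m) (hr : 0 < r) (hb : 0 < b)
    (h : b ^ 2 * (r - 2 * m) = r ^ 3) : r < b := by
  have hcube : r * r ^ 2 < r * b ^ 2 := by nlinarith [mul_pos hm (pow_pos hb 2)]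
  exact (pow_lt_pow_iff_left₀ hr.le hb.le two_ne_zero).mp (lt_of_mul_lt_mul_left hcube hr.le)

-- `r - 2m ≥ r / 3` on `r ≥ 3m`, so `r ^ 3 ≥ b ^ 2 r / 3`.
theorem le_three_mul_of_periastron_cubic (hm : 0 < m) (hr : 3 * m < r)
    (h : b ^ 2 * (r - 2 * m) = r ^ 3) : b ≤ 3 * r := by
  have hr0 : 0 < r := by linarith
  have hsq : b ^ 2 ≤ (3 * r) ^ 2 := by nlinarith [sq_nonneg b]
  exact abs_le_of_sq_le_sq' hsq (by linarith) |>.2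

theorem sub_le_of_periastron_cubic (hm : 0 < m) (hr : 3 * m < r) (hb : 0 < b)
    (h : b ^ 2 * (r - 2 * m) = r ^ 3) : b - r ≤ 6 * m := by
  have hr0 : 0 < r := by linarith
  have hpos : 0 < r * (b + r) := by positivity
  refine le_of_mul_le_mul_left ?_ hpos
  calc r * (b + r) * (b - r) = 2 * m * b * b := by linear_combination h
    _ ≤ 2 * m * b * (3 * r) := by
        gcongr
        exact le_three_mul_of_periastron_cubic hm hr h
    _ ≤ r * (b + r) * (6 * m) := by nlinarith [mul_pos hm hr0]

end PeriastronCubic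

/-- For large impact parameter the periastron radius is asymptotically equal to
the impact parameter: `r_p(b)/b → 1` as `b → ∞` (almost straight-line orbits). -/
theorem schwarzschild_periastron_asymptotic
    (m : ℝ) (hm : 0 < m) (f : ℝ → ℝ)
    (hf : ∀ r : ℝ, f r = (1 - 2 * m / r) / r ^ 2)
    (rp : ℝ → ℝ)
    (hrp : ∀ b : ℝ, 3 * Real.sqrt 3 * m < b →
      rp b ∈ Set.Ioi (3 * m) ∧ f (rp b) = 1 / b ^ 2) :
    Tendsto (fun b : ℝ => rp b / b) atTop (nhds 1) := by
  have hcrit : 0 < 3 * Real.sqrt 3 * m := by positivity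
  refine tendsto_div_self_atTop_of_abs_sub_le (C := 6 * m) ?_
  filter_upwards [eventually_gt_atTop (3 * Real.sqrt 3 * m)] with b hb
  obtain ⟨hr, hfr⟩ := hrp b hb
  have hb0 : 0 < b := hcrit.trans hb
  have hr0 : 0 < rp b := (mul_pos three_pos hm).trans hr
  have hcubic := periastron_cubic_of_eq hr0.ne' hb0.ne' (hf (rp b) ▸ hfr)
  have hlt := lt_of_periastron_cubic hm hr0 hb0 hcubic
  have hle := sub_le_of_periastron_cubic hm hr hb0 hcubic
  rw [abs_sub_comm, abs_of_pos (sub_pos.mpr hlt)]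
  exact hle
end

section
/- Let m > 0 and f(r) = (1 - 2m/r)/r² for r > 2m, and let b > 3√3·m with periastron r_p(b) (the unique root of f(r) = 1/b² in (3m, ∞)). Then the function r ↦ 1/(r² · √(1/b² - f(r))) is integrable on the interval (r_p(b), ∞); in particular the total azimuthal angle Δφ(b) = 2∫_{r_p(b)}^{∞} dr/(r² √(1/b² - f(r))) swept by a scattering null geodesic with impact parameter b is finite. -/
/-!
Let `E = f(r_p) = 1/b²`. Clearing denominators,
`E - f(r) = (r - r_p) · G(r) / (r³ r_p³)` with
`G(r) = 2 r_p² (r_p - 3m) + (r - r_p)(r + 2 r_p)(r_p - 2m) ≥ 2 r_p² (r_p - 3m) > 0`,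
so `r_p` is a simple zero of `E - f` and the integrand is `O((r - r_p)^(-1/2))` near the
periastron. Far out, `f(r) < 1/r² ≤ E/2`, so the integrand is `O(r⁻²)` there. Both bounds
are integrable.
-/

open MeasureTheory Set

section InverseSqrtIntegrand

variable {h : ℝ → ℝ}

theorem measurable_one_div_sq_mul_sqrt (hh : Measurable h) :
    Measurable fun r => 1 / (r ^ 2 * √(h r)) := by
  fun_prop

theorem integrableOn_Ioc_one_div_sq_mul_sqrt_of_linear_le {a R c : ℝ} (ha : 0 < a)
    (hc : 0 < c) (hh : Measurable h) (hlow : ∀ r ∈ Ioc a R, c * (r - a) ≤ h r) :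
    IntegrableOn (fun r => 1 / (r ^ 2 * √(h r))) (Ioc a R) := by
  set C := 1 / (a ^ 2 * √c) with hCdef
  have hbound : IntegrableOn (fun r => C * (r - a) ^ (-(1 / 2) : ℝ)) (Ioc a R) := by
    have hrpow : IntervalIntegrable (fun x : ℝ => x ^ (-(1 / 2) : ℝ)) volume 0 (R - a) :=
      intervalIntegral.intervalIntegrable_rpow' (by norm_num)
    have hshift := (hrpow.comp_sub_right a).const_mul C
    simp only [zero_add, sub_add_cancel] at hshift
    exact hshift.def'.mono_set Ioc_subset_uIoc
  refine hbound.mono' (measurable_one_div_sq_mul_sqrt hh).aestronglyMeasurable <|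
    (ae_restrict_iff' measurableSet_Ioc).2 <| ae_of_all _ fun r ⟨har, hrR⟩ => ?_
  have hra : 0 < r - a := sub_pos.2 har
  have hsqrt : √c * √(r - a) ≤ √(h r) := by
    rw [← Real.sqrt_mul hc.le]
    exact Real.sqrt_le_sqrt (hlow r ⟨har, hrR⟩)
  have hC : C * (r - a) ^ (-(1 / 2) : ℝ) = 1 / (a ^ 2 * (√c * √(r - a))) := by
    rw [Real.rpow_neg hra.le, ← Real.sqrt_eq_rpow, hCdef]
    field_simp
  rw [Real.norm_eq_abs, abs_of_nonneg (by positivity), hC]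
  gcongr

theorem integrableOn_Ioi_one_div_sq_mul_sqrt_of_le {R k : ℝ} (hR : 0 < R) (hk : 0 < k)
    (hh : Measurable h) (hlow : ∀ r ∈ Ioi R, k ≤ h r) :
    IntegrableOn (fun r => 1 / (r ^ 2 * √(h r))) (Ioi R) := by
  have hbound : IntegrableOn (fun r : ℝ => 1 / √k * r ^ (-2 : ℝ)) (Ioi R) :=
    (integrableOn_Ioi_rpow_of_lt (by norm_num) hR).const_mul _
  refine hbound.mono' (measurable_one_div_sq_mul_sqrt hh).aestronglyMeasurable <|
    (ae_restrict_iff' measurableSet_Ioi).2 <| ae_of_all _ fun r hRr => ?_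
  have hr : 0 < r := hR.trans hRr
  have hpow : 1 / √k * r ^ (-2 : ℝ) = 1 / (r ^ 2 * √k) := by
    rw [Real.rpow_neg hr.le, Real.rpow_two]
    field_simp
  rw [Real.norm_eq_abs, abs_of_nonneg (by positivity), hpow]
  gcongr
  exact hlow r hRr

end InverseSqrtIntegrand

namespace Schwarzschild

noncomputable def potential (m r : ℝ) : ℝ := (1 - 2 * m / r) / r ^ 2

variable {m p r : ℝ}

theorem measurable_potential : Measurable (potential m) := by
  unfold potential
  fun_prop

theorem potential_pos (hr : 2 * m < r) (hr0 : 0 < r) : 0 < potential m r := by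
  unfold potential
  have : 2 * m / r < 1 := (div_lt_one hr0).2 hr
  have : 0 < 1 - 2 * m / r := by linarith
  positivity

theorem potential_lt_inv_sq (hm : 0 < m) (hr : 0 < r) : potential m r < 1 / r ^ 2 := by
  unfold potential
  gcongr
  have : 0 < 2 * m / r := by positivity
  linarith

theorem potential_sub_potential (hp : p ≠ 0) (hr : r ≠ 0) :
    potential m p - potential m r =
      (r - p) * (2 * p ^ 2 * (p - 3 * m) + (r - p) * (r + 2 * p) * (p - 2 * m)) /
        (r ^ 3 * p ^ 3) := by
  unfold potential
  field_simp
  ring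

theorem linear_le_potential_sub (hm : 0 < m) (hp : 3 * m < p) {R : ℝ} (hr : r ∈ Ioc p R) :
    2 * (p - 3 * m) / (R ^ 3 * p) * (r - p) ≤ potential m p - potential m r := by
  obtain ⟨hpr, hrR⟩ := hr
  have hp0 : 0 < p := by linarith
  have hr0 : 0 < r := hp0.trans hpr
  rw [potential_sub_potential hp0.ne' hr0.ne']
  calc 2 * (p - 3 * m) / (R ^ 3 * p) * (r - p)
      = (r - p) * (2 * p ^ 2 * (p - 3 * m)) / (R ^ 3 * p ^ 3) := by field_simp
    _ ≤ (r - p) * (2 * p ^ 2 * (p - 3 * m)) / (r ^ 3 * p ^ 3) := by gcongr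
    _ ≤ (r - p) * (2 * p ^ 2 * (p - 3 * m) + (r - p) * (r + 2 * p) * (p - 2 * m)) /
          (r ^ 3 * p ^ 3) := by
      have : 0 ≤ (r - p) * (r + 2 * p) * (p - 2 * m) := by
        apply mul_nonneg (mul_nonneg _ _) _ <;> linarith
      gcongr
      linarith

theorem half_le_potential_sub (hm : 0 < m) (hp : 0 < potential m p) (hr : 0 < r)
    (hr2 : 2 / potential m p ≤ r ^ 2) :
    potential m p / 2 ≤ potential m p - potential m r := by
  have hlt := potential_lt_inv_sq hm hr
  have : 1 / r ^ 2 ≤ potential m p / 2 := by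
    rw [div_le_div_iff₀ (by positivity) two_pos]
    rw [div_le_iff₀ hp] at hr2
    linarith
  linarith

theorem integrableOn_Ioi_one_div_sq_mul_sqrt_potential_sub (hm : 0 < m) (hp : 3 * m < p) :
    IntegrableOn (fun r => 1 / (r ^ 2 * √(potential m p - potential m r))) (Ioi p) := by
  have hp0 : 0 < p := by linarith
  have hE : 0 < potential m p := potential_pos (by linarith) hp0
  have hmeas : Measurable fun r => potential m p - potential m r :=
    measurable_const.sub measurable_potential
  set R := p + √(2 / potential m p) with hR
  have hpR : p ≤ R := le_add_of_nonneg_right (Real.sqrt_nonneg _)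
  have hR0 : 0 < R := hp0.trans_le hpR
  rw [← Ioc_union_Ioi_eq_Ioi hpR]
  refine IntegrableOn.union ?_ ?_
  · exact integrableOn_Ioc_one_div_sq_mul_sqrt_of_linear_le hp0
      (div_pos (by linarith) (by positivity)) hmeas fun r hr => linear_le_potential_sub hm hp hr
  · refine integrableOn_Ioi_one_div_sq_mul_sqrt_of_le hR0 (half_pos hE) hmeas
      fun r (hRr : R < r) => half_le_potential_sub hm hE (by linarith) ?_
    calc 2 / potential m p = √(2 / potential m p) ^ 2 := (Real.sq_sqrt (by positivity)).symm
      _ ≤ r ^ 2 := by gcongr; linarith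

end Schwarzschild

theorem schwarzschild_azimuthal_angle_finite_general
    (m : ℝ) (hm : 0 < m) (f : ℝ → ℝ)
    (hf : ∀ r : ℝ, f r = (1 - 2 * m / r) / r ^ 2)
    (b : ℝ)
    (rp : ℝ) (hrp : rp ∈ Set.Ioi (3 * m)) (hroot : f rp = 1 / b ^ 2) :
    IntegrableOn (fun r : ℝ => 1 / (r ^ 2 * Real.sqrt (1 / b ^ 2 - f r)))
      (Set.Ioi rp) volume := by
  obtain rfl : f = Schwarzschild.potential m := funext hf
  rw [← hroot]
  exact Schwarzschild.integrableOn_Ioi_one_div_sq_mul_sqrt_potential_sub hm hrp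

/-- For `b > 3√3·m` with periastron `r_p` (the unique root of `f(r) = 1/b²` in
`(3m, ∞)`), the integrand `1/(r² √(1/b² - f(r)))` is integrable on
`(r_p, ∞)`; in particular the total azimuthal angle
`Δφ(b) = 2∫_{r_p}^{∞} dr/(r² √(1/b² - f(r)))` of a scattering orbit is finite. -/
theorem schwarzschild_azimuthal_angle_finite
    (m : ℝ) (hm : 0 < m) (f : ℝ → ℝ)
    (hf : ∀ r : ℝ, f r = (1 - 2 * m / r) / r ^ 2)
    (b : ℝ) (hb : 3 * Real.sqrt 3 * m < b)
    (rp : ℝ) (hrp : rp ∈ Set.Ioi (3 * m)) (hroot : f rp = 1 / b ^ 2) :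
    IntegrableOn (fun r : ℝ => 1 / (r ^ 2 * Real.sqrt (1 / b ^ 2 - f r)))
      (Set.Ioi rp) volume :=
  schwarzschild_azimuthal_angle_finite_general m hm f hf b rp hrp hroot
end

section
/- Let m > 0 and f(r) = (1 - 2m/r)/r² for r > 2m, and for b > 3√3·m define the total azimuthal angle Δφ(b) = 2∫_{r_p(b)}^{∞} dr/(r² √(1/b² - f(r))), where r_p(b) is the unique root of f(r) = 1/b² in (3m, ∞). Then lim_{b → ∞} b·(Δφ(b) - π) = 4m; that is, for impact parameter b ≫ 3√3·m the orbit is an almost straight line with deflection angle asymptotic to 4m/b. -/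
/-!
Put `ε = 2m/ρ` with `ρ = r_p(b)` and substitute `r = ρ / sin θ`. Since `f(ρ) = 1/b²`,
the radicand becomes `1/b² - f(r) = (cos θ / ρ)² (1 - ε h(θ))` with
`h(θ) = sin θ + 1/(1 + sin θ)`, so `Δφ(b) = 2 I(ε)` where
`I(ε) = ∫₀^{π/2} (1 - ε h(θ))^{-1/2} dθ`. Thus `I(0) = π/2`, and differentiating under the
integral sign gives `I'(0) = ½ ∫₀^{π/2} h = 1`. Finally `b/ρ = (1 - ε)^{-1/2}`, so
`ε → 0` and `b ε → 2m`, whence `b (Δφ(b) - π) = 2 (b ε) (I(ε) - I(0))/ε → 4m`.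
-/

open Filter MeasureTheory Real Set Topology

theorem hasDerivAt_integral_inv_sqrt_one_sub_mul {α : Type*} [MeasurableSpace α]
    {μ : Measure α} [IsFiniteMeasure μ] {w : α → ℝ} {C : ℝ}
    (hw_meas : AEStronglyMeasurable w μ) (hw : ∀ᵐ a ∂μ, |w a| ≤ C) :
    HasDerivAt (fun ε => ∫ a, (√(1 - ε * w a))⁻¹ ∂μ) ((∫ a, w a ∂μ) / 2) 0 := by
  set K := |C| + 1
  have hK : 0 < K := by positivity
  have hwK : ∀ᵐ a ∂μ, |w a| ≤ K := hw.mono fun a ha => ha.trans (by linarith [le_abs_self C])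
  have hball : ∀ᵐ a ∂μ, ∀ ε ∈ Metric.ball (0 : ℝ) (2 * K)⁻¹, 1 / 2 ≤ 1 - ε * w a := by
    filter_upwards [hwK] with a ha ε hε
    rw [mem_ball_zero_iff, Real.norm_eq_abs] at hε
    have : |ε * w a| ≤ 1 / 2 := calc
      |ε * w a| = |ε| * |w a| := abs_mul _ _
      _ ≤ (2 * K)⁻¹ * K := mul_le_mul hε.le ha (abs_nonneg _) (by positivity)
      _ = 1 / 2 := by field_simp
    linarith [le_abs_self (ε * w a)]
  have hderiv : ∀ᵐ a ∂μ, ∀ ε ∈ Metric.ball (0 : ℝ) (2 * K)⁻¹,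
      HasDerivAt (fun ε => (√(1 - ε * w a))⁻¹) (w a / (2 * √(1 - ε * w a) ^ 3)) ε := by
    filter_upwards [hball] with a ha ε hε
    have hpos : 0 < 1 - ε * w a := by linarith [ha ε hε]
    refine ((((hasDerivAt_id ε).mul_const (w a)).const_sub 1).sqrt hpos.ne').inv
      (Real.sqrt_pos.2 hpos).ne' |>.congr_deriv ?_
    simp only [id]
    ring
  have hbound : ∀ᵐ a ∂μ, ∀ ε ∈ Metric.ball (0 : ℝ) (2 * K)⁻¹,
      ‖w a / (2 * √(1 - ε * w a) ^ 3)‖ ≤ 4 * K := by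
    filter_upwards [hball, hwK] with a ha haK ε hε
    have hsqrt : 1 / 2 ≤ √(1 - ε * w a) :=
      Real.le_sqrt_of_sq_le (by linarith [ha ε hε])
    have hcube : (1 / 2) ^ 3 ≤ √(1 - ε * w a) ^ 3 := pow_le_pow_left₀ (by norm_num) hsqrt 3
    rw [Real.norm_eq_abs, abs_div, abs_of_pos (show 0 < 2 * √(1 - ε * w a) ^ 3 by positivity),
      div_le_iff₀ (by positivity)]
    nlinarith
  have hmeas : ∀ ε : ℝ, AEStronglyMeasurable (fun a => (√(1 - ε * w a))⁻¹) μ := fun ε =>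
    ((hw_meas.aemeasurable.const_mul ε).const_sub 1).sqrt.inv.aestronglyMeasurable
  have hdiff := hasDerivAt_integral_of_dominated_loc_of_deriv_le (μ := μ)
    (F := fun ε a => (√(1 - ε * w a))⁻¹) (x₀ := 0)
    (Metric.ball_mem_nhds 0 (by positivity)) (Eventually.of_forall hmeas)
    (by simp) (by simpa using (hw_meas.aemeasurable.div_const 2).aestronglyMeasurable)
    hbound (integrable_const _) hderiv
  simpa [integral_div] using hdiff.2

lemma sin_mem_Ioo_of_mem_Ioo {θ : ℝ} (hθ : θ ∈ Ioo 0 (π / 2)) : sin θ ∈ Ioo 0 1 := by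
  refine ⟨sin_pos_of_pos_of_lt_pi hθ.1 (by linarith [hθ.2, pi_pos]), ?_⟩
  simpa using sin_lt_sin_of_lt_of_le_pi_div_two (by linarith [hθ.1, pi_pos]) le_rfl hθ.2

lemma image_div_sin_Ioo {ρ : ℝ} (hρ : 0 < ρ) :
    (fun θ => ρ / sin θ) '' Ioo 0 (π / 2) = Ioi ρ := by
  ext r
  constructor
  · rintro ⟨θ, hθ, rfl⟩
    obtain ⟨hs0, hs1⟩ := sin_mem_Ioo_of_mem_Ioo hθ
    exact (lt_div_iff₀ hs0).2 (mul_lt_of_lt_one_right hρ hs1)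
  · intro hr
    have hr0 : 0 < r := hρ.trans hr
    have hρr : ρ / r ∈ Ioo 0 1 := ⟨by positivity, (div_lt_one hr0).2 hr⟩
    refine ⟨arcsin (ρ / r), ⟨arcsin_pos.2 hρr.1, arcsin_lt_pi_div_two.2 hρr.2⟩, ?_⟩
    show ρ / sin (arcsin (ρ / r)) = r
    rw [sin_arcsin (by linarith [hρr.1]) hρr.2.le]
    field_simp

lemma injOn_div_sin_Ioo {ρ : ℝ} (hρ : ρ ≠ 0) : InjOn (fun θ => ρ / sin θ) (Ioo 0 (π / 2)) := by
  intro a ha b hb hab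
  refine injOn_sin ⟨?_, ha.2.le⟩ ⟨?_, hb.2.le⟩
    (inv_injective (mul_right_injective₀ hρ (by simpa only [div_eq_mul_inv] using hab)))
  all_goals linarith [pi_pos, ha.1, hb.1]

theorem integral_Ioi_eq_integral_div_sin {E : Type*} [NormedAddCommGroup E] [NormedSpace ℝ E]
    {ρ : ℝ} (hρ : 0 < ρ) (g : ℝ → E) :
    ∫ r in Ioi ρ, g r = ∫ θ in Ioo 0 (π / 2), (ρ * cos θ / sin θ ^ 2) • g (ρ / sin θ) := by
  have hderiv : ∀ θ ∈ Ioo 0 (π / 2), HasDerivWithinAt (fun θ => ρ / sin θ)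
      (-(ρ * cos θ / sin θ ^ 2)) (Ioo 0 (π / 2)) θ := fun θ hθ => by
    refine ((hasDerivAt_const θ ρ).div (hasDerivAt_sin θ)
      (sin_mem_Ioo_of_mem_Ioo hθ).1.ne').hasDerivWithinAt.congr_deriv ?_
    ring
  rw [← image_div_sin_Ioo hρ, integral_image_eq_integral_abs_deriv_smul measurableSet_Ioo hderiv
    (injOn_div_sin_Ioo hρ.ne')]
  refine setIntegral_congr_fun measurableSet_Ioo fun θ hθ => ?_
  have hcos : 0 < cos θ := cos_pos_of_mem_Ioo ⟨by linarith [hθ.1, pi_pos], hθ.2⟩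
  have hsin : 0 < sin θ := (sin_mem_Ioo_of_mem_Ioo hθ).1
  rw [abs_neg, abs_of_pos (by positivity)]

noncomputable def deflectionWeight (θ : ℝ) : ℝ := sin θ + (1 + sin θ)⁻¹

lemma abs_deflectionWeight_le {θ : ℝ} (hθ : 0 ≤ sin θ) : |deflectionWeight θ| ≤ 2 := by
  have hinv : (1 + sin θ)⁻¹ ≤ 1 := inv_le_one_of_one_le₀ (by linarith)
  rw [deflectionWeight, abs_of_nonneg (by positivity)]
  linarith [sin_le_one θ]

lemma hasDerivAt_deflectionWeight_primitive {θ : ℝ} (hθ : 0 ≤ sin θ) :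
    HasDerivAt (fun t => -cos t - cos t / (1 + sin t)) (deflectionWeight θ) θ := by
  have hne : 1 + sin θ ≠ 0 := by positivity
  refine ((hasDerivAt_cos θ).neg.sub ((hasDerivAt_cos θ).div
    ((hasDerivAt_sin θ).const_add 1) hne)).congr_deriv ?_
  rw [deflectionWeight]
  field_simp
  linear_combination sin_sq_add_cos_sq θ

lemma integral_deflectionWeight : ∫ θ in Ioo 0 (π / 2), deflectionWeight θ = 2 := by
  have hle : (0 : ℝ) ≤ π / 2 := by positivity
  have hsin : ∀ θ ∈ uIcc 0 (π / 2), 0 ≤ sin θ := fun θ hθ => by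
    rw [uIcc_of_le hle] at hθ
    exact sin_nonneg_of_nonneg_of_le_pi hθ.1 (by linarith [hθ.2, pi_pos])
  rw [← integral_Ioc_eq_integral_Ioo, ← intervalIntegral.integral_of_le hle,
    intervalIntegral.integral_eq_sub_of_hasDerivAt
      (fun θ hθ => hasDerivAt_deflectionWeight_primitive (hsin θ hθ))]
  · norm_num
  · refine ContinuousOn.intervalIntegrable fun θ hθ => ?_
    have : 1 + sin θ ≠ 0 := by linarith [hsin θ hθ]
    unfold deflectionWeight
    fun_prop (disch := assumption)

noncomputable def angleIntegral (ε : ℝ) : ℝ :=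
  ∫ θ in Ioo 0 (π / 2), (√(1 - ε * deflectionWeight θ))⁻¹

lemma angleIntegral_zero : angleIntegral 0 = π / 2 := by
  simp [angleIntegral, volume_real_Ioo_of_le (by positivity : (0 : ℝ) ≤ π / 2)]

lemma hasDerivAt_angleIntegral : HasDerivAt angleIntegral 1 0 := by
  have hw : ∀ᵐ θ ∂(volume.restrict (Ioo 0 (π / 2))), |deflectionWeight θ| ≤ 2 :=
    (ae_restrict_iff' measurableSet_Ioo).2 <| Eventually.of_forall fun θ hθ =>
      abs_deflectionWeight_le (sin_mem_Ioo_of_mem_Ioo hθ).1.le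
  have hmeas : AEStronglyMeasurable deflectionWeight (volume.restrict (Ioo 0 (π / 2))) := by
    unfold deflectionWeight
    fun_prop
  have := hasDerivAt_integral_inv_sqrt_one_sub_mul hmeas hw
  rwa [integral_deflectionWeight, div_self two_ne_zero] at this

lemma schwarzschild_integrand_div_sin {m ρ b s c : ℝ} (hρ : 0 < ρ) (hs : 0 < s) (hc : 0 < c)
    (hsc : s ^ 2 + c ^ 2 = 1) (hb : (1 - 2 * m / ρ) / ρ ^ 2 = 1 / b ^ 2) :
    ρ * c / s ^ 2 * (1 / ((ρ / s) ^ 2 * √(1 / b ^ 2 - (1 - 2 * m / (ρ / s)) / (ρ / s) ^ 2)))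
      = (√(1 - 2 * m / ρ * (s + (1 + s)⁻¹)))⁻¹ := by
  have hradicand : 1 / b ^ 2 - (1 - 2 * m / (ρ / s)) / (ρ / s) ^ 2
      = (c / ρ) ^ 2 * (1 - 2 * m / ρ * (s + (1 + s)⁻¹)) := by
    rw [← hb, div_pow c, show c ^ 2 = 1 - s ^ 2 by linarith]
    field_simp
    ring
  rw [hradicand, sqrt_mul (sq_nonneg _), sqrt_sq (by positivity),
    show (ρ / s) ^ 2 * (c / ρ * √(1 - 2 * m / ρ * (s + (1 + s)⁻¹)))
      = ρ * c / s ^ 2 * √(1 - 2 * m / ρ * (s + (1 + s)⁻¹)) by field_simp,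
    one_div, mul_inv, mul_inv_cancel_left₀ (by positivity)]

theorem integral_Ioi_schwarzschild_eq_angleIntegral {m ρ b : ℝ} (hρ : 0 < ρ)
    (hb : (1 - 2 * m / ρ) / ρ ^ 2 = 1 / b ^ 2) :
    ∫ r in Ioi ρ, 1 / (r ^ 2 * √(1 / b ^ 2 - (1 - 2 * m / r) / r ^ 2))
      = angleIntegral (2 * m / ρ) := by
  rw [integral_Ioi_eq_integral_div_sin hρ]
  refine setIntegral_congr_fun measurableSet_Ioo fun θ hθ => ?_
  exact schwarzschild_integrand_div_sin hρ (sin_mem_Ioo_of_mem_Ioo hθ).1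
    (cos_pos_of_mem_Ioo ⟨by linarith [hθ.1, pi_pos], hθ.2⟩) (sin_sq_add_cos_sq θ) hb

lemma div_eq_sqrt_of_turningPoint {m ρ b : ℝ} (hρ : 0 < ρ) (hb : 0 < b)
    (h : (1 - 2 * m / ρ) / ρ ^ 2 = 1 / b ^ 2) : ρ / b = √(1 - 2 * m / ρ) := by
  have hsq : 1 - 2 * m / ρ = (ρ / b) ^ 2 := by
    field_simp at h ⊢
    linarith
  rw [hsq, sqrt_sq (by positivity)]

lemma tendsto_compactness_of_turningPoint {m : ℝ} (hm : 0 < m) {ρ : ℝ → ℝ}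
    (hρ : ∀ᶠ b in atTop, 3 * m < ρ b ∧ (1 - 2 * m / ρ b) / ρ b ^ 2 = 1 / b ^ 2) :
    Tendsto (fun b => 2 * m / ρ b) atTop (𝓝[≠] 0) ∧
      Tendsto (fun b => b * (2 * m / ρ b)) atTop (𝓝 (2 * m)) := by
  have hroot : ∀ᶠ b in atTop, 0 < ρ b ∧ 2 * m / ρ b < 3 / 4 ∧ ρ b / b = √(1 - 2 * m / ρ b) := by
    filter_upwards [hρ, eventually_gt_atTop 0] with b ⟨h3m, hb⟩ hb0
    have hρ0 : 0 < ρ b := by linarith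
    refine ⟨hρ0, ?_, div_eq_sqrt_of_turningPoint hρ0 hb0 hb⟩
    rw [div_lt_iff₀ hρ0]
    linarith
  have hρ_top : Tendsto ρ atTop atTop := by
    refine tendsto_atTop_mono' _ ?_ (tendsto_id.atTop_div_const (by norm_num : (0 : ℝ) < 2))
    filter_upwards [hroot, eventually_gt_atTop 0] with b ⟨hρ0, hε, hsqrt⟩ hb0
    have : 1 / 2 ≤ ρ b / b := hsqrt ▸ le_sqrt_of_sq_le (by linarith)
    rw [le_div_iff₀ hb0] at this
    simp only [id]
    linarith
  have hε : Tendsto (fun b => 2 * m / ρ b) atTop (𝓝[≠] 0) :=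
    tendsto_nhdsWithin_iff.2 ⟨hρ_top.const_div_atTop _,
      hroot.mono fun b hb => (div_pos (by positivity) hb.1).ne'⟩
  refine ⟨hε, ?_⟩
  have hcont : Tendsto (fun ε => 2 * m / √(1 - ε)) (𝓝 0) (𝓝 (2 * m)) := by
    have : ContinuousAt (fun ε : ℝ => 2 * m / √(1 - ε)) 0 :=
      continuousAt_const.div (continuous_const.sub continuous_id).sqrt.continuousAt (by simp)
    simpa using this.tendsto
  refine (hcont.comp (tendsto_nhdsWithin_iff.1 hε).1).congr' ?_
  filter_upwards [hroot, eventually_gt_atTop 0] with b ⟨hρ0, _, hsqrt⟩ hb0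
  simp only [Function.comp, ← hsqrt]
  field_simp

/-- Weak-deflection limit: with `Δφ(b) = 2∫_{r_p(b)}^{∞} dr/(r²√(1/b² - f(r)))`
the total azimuthal angle of a scattering null geodesic, one has
`b·(Δφ(b) - π) → 4m` as `b → ∞`: for `b ≫ 3√3·m` the orbit is an almost
straight line with deflection angle asymptotic to `4m/b`. -/
theorem schwarzschild_weak_deflection_angle
    (m : ℝ) (hm : 0 < m) (f : ℝ → ℝ)
    (hf : ∀ r : ℝ, f r = (1 - 2 * m / r) / r ^ 2)
    (rp : ℝ → ℝ)
    (hrp : ∀ b : ℝ, 3 * Real.sqrt 3 * m < b →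
      rp b ∈ Set.Ioi (3 * m) ∧ f (rp b) = 1 / b ^ 2)
    (Δφ : ℝ → ℝ)
    (hΔφ : ∀ b : ℝ, 3 * Real.sqrt 3 * m < b →
      Δφ b = 2 * ∫ r in Set.Ioi (rp b), 1 / (r ^ 2 * Real.sqrt (1 / b ^ 2 - f r))) :
    Tendsto (fun b : ℝ => b * (Δφ b - Real.pi)) atTop (nhds (4 * m)) := by
  obtain rfl : f = fun r => (1 - 2 * m / r) / r ^ 2 := funext hf
  have hroot := (eventually_gt_atTop (3 * √3 * m)).mono fun b hb => hrp b hb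
  obtain ⟨hε, hbε⟩ := tendsto_compactness_of_turningPoint hm hroot
  have hslope := (hasDerivAt_iff_tendsto_slope.1 hasDerivAt_angleIntegral).comp hε
  have hlim := (hbε.const_mul 2).mul hslope
  rw [show 2 * (2 * m) * 1 = 4 * m by ring] at hlim
  refine hlim.congr' ?_
  filter_upwards [eventually_gt_atTop (3 * √3 * m)] with b hb
  obtain ⟨hρ, hfρ⟩ := hrp b hb
  have hρ0 : 0 < rp b := by linarith [mem_Ioi.1 hρ]
  rw [Function.comp_apply, slope_def_field, hΔφ b hb,
    integral_Ioi_schwarzschild_eq_angleIntegral hρ0 hfρ, angleIntegral_zero]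
  field_simp
  ring
end

section
/- Let m > 0 and f(r) = (1 - 2m/r)/r² for r > 2m, and for b > 3√3·m define Δφ(b) = 2∫_{r_p(b)}^{∞} dr/(r² √(1/b² - f(r))), where r_p(b) is the unique root of f(r) = 1/b² in (3m, ∞). Then Δφ(b) → ∞ as b → (3√3·m)⁺: for every M there is δ > 0 such that Δφ(b) > M whenever 3√3·m < b < 3√3·m + δ. That is, for 0 < b - 3√3·m ≪ m a massless particle circles the unstable circular orbit many times before flying back to infinity. -/
/-!
The potential `f` attains its maximum `1 / (27 m²) = 1 / (3√3 m)²` at the photon sphere `r = 3m`,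
where `f (3m) - f r = (r - 3m)² (r + 6m) / (27 m² r³)` vanishes to second order. Hence, once the
turning point `a` is close to `3m`, the integrand is at least `(9/16) / (r - 3m)` on `(a, 4m]`, and
the integral is at least `(9/16) log (m / (a - 3m))`. Since `f` is strictly decreasing on
`[3m, ∞)`, `f (r_p b) = 1 / b² → f (3m)` forces `r_p b → 3m` as `b ↓ 3√3 m`. The integral is a
genuine (not junk) Bochner integral: near `a` we have `f a - f r ≥ c (r - a)`, a square-root
singularity, and at infinity the integrand decays like `r⁻²`.
-/

open Filter MeasureTheory Set Topology

lemma StrictAntiOn.tendsto_of_tendsto_comp {α β γ : Type*} [LinearOrder β] [TopologicalSpace β]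
    [OrderTopology β] [LinearOrder γ] [TopologicalSpace γ] [OrderTopology γ] {g : β → γ}
    {x₀ : β} (hg : StrictAntiOn g (Ici x₀)) {l : Filter α} {y : α → β}
    (hy : ∀ᶠ t in l, x₀ ≤ y t) (hgy : Tendsto (g ∘ y) l (𝓝 (g x₀))) : Tendsto y l (𝓝 x₀) := by
  refine tendsto_order.2 ⟨fun x hx => hy.mono fun t ht => hx.trans_le ht, fun x hx => ?_⟩
  have hxI : x ∈ Ici x₀ := hx.le
  filter_upwards [hy, (tendsto_order.1 hgy).1 (g x) (hg (mem_Ici.2 le_rfl) hxI hx)] with t hyt hgt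
  exact lt_of_not_ge fun hxy => (hg.antitoneOn hxI hyt hxy).not_gt hgt

noncomputable def nullPotential (m r : ℝ) : ℝ := (1 - 2 * m / r) / r ^ 2

/-- The integrand of `Δφ` parametrized by the turning point `a` instead of `b`:
`1 / b ^ 2 = nullPotential m a`. -/
noncomputable def deflectionIntegrand (m a r : ℝ) : ℝ :=
  1 / (r ^ 2 * √(nullPotential m a - nullPotential m r))

section

variable {m a r : ℝ}

lemma hasDerivAt_nullPotential (m : ℝ) (hr : r ≠ 0) :
    HasDerivAt (nullPotential m) ((6 * m - 2 * r) / r ^ 4) r := by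
  have h := (((hasDerivAt_const r (2 * m)).fun_div (hasDerivAt_id' r) hr).const_sub 1).fun_div
    (hasDerivAt_pow 2 r) (pow_ne_zero 2 hr)
  refine h.congr_deriv ?_
  field_simp
  ring

lemma strictAntiOn_nullPotential (hm : 0 < m) : StrictAntiOn (nullPotential m) (Ici (3 * m)) := by
  refine strictAntiOn_of_deriv_neg (convex_Ici _) (fun r hr => ?_) fun r hr => ?_
  · have hr : 0 < r := by linarith [mem_Ici.1 hr]
    exact (hasDerivAt_nullPotential m hr.ne').continuousAt.continuousWithinAt
  · have hr : 3 * m < r := by rwa [interior_Ici] at hr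
    have hr0 : 0 < r := by linarith
    rw [(hasDerivAt_nullPotential m hr0.ne').deriv]
    exact div_neg_of_neg_of_pos (by linarith) (by positivity)

lemma nullPotential_three_mul (hm : m ≠ 0) :
    nullPotential m (3 * m) = 1 / (3 * √3 * m) ^ 2 := by
  rw [nullPotential, mul_pow, mul_pow, mul_pow, Real.sq_sqrt (by norm_num)]
  field_simp
  ring

lemma nullPotential_three_mul_sub (hm : m ≠ 0) (hr : r ≠ 0) :
    nullPotential m (3 * m) - nullPotential m r =
      (r - 3 * m) ^ 2 * (r + 6 * m) / (27 * m ^ 2 * r ^ 3) := by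
  unfold nullPotential
  field_simp
  ring

lemma nullPotential_sub_le (hm : 0 < m) (ha : 3 * m ≤ a) (har : a ≤ r) :
    nullPotential m a - nullPotential m r ≤ (r - 3 * m) ^ 2 / (81 * m ^ 4) := by
  have hr : 0 < r := by linarith
  calc nullPotential m a - nullPotential m r
      ≤ nullPotential m (3 * m) - nullPotential m r := by
        gcongr
        exact (strictAntiOn_nullPotential hm).antitoneOn (mem_Ici.2 le_rfl) ha ha
    _ = (r - 3 * m) ^ 2 * (r + 6 * m) / (27 * m ^ 2 * r ^ 3) :=
        nullPotential_three_mul_sub hm.ne' hr.ne'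
    _ ≤ (r - 3 * m) ^ 2 / (81 * m ^ 4) := by
        have hcubic : 3 * m ^ 2 * (r + 6 * m) ≤ r ^ 3 := by
          nlinarith [mul_nonneg (by linarith : 0 ≤ r - 3 * m)
            (by positivity : 0 ≤ r ^ 2 + 3 * m * r + 6 * m ^ 2)]
        rw [div_le_div_iff₀ (by positivity) (by positivity)]
        nlinarith [mul_le_mul_of_nonneg_left hcubic
          (by positivity : 0 ≤ 27 * m ^ 2 * (r - 3 * m) ^ 2)]

lemma mul_sub_le_nullPotential_sub (hm : 0 < m) (ha : 3 * m ≤ a) (har : a ≤ r) :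
    2 * (a - 3 * m) / r ^ 4 * (r - a) ≤ nullPotential m a - nullPotential m r := by
  have hderiv : ∀ x ∈ Icc a r,
      HasDerivAt (fun s => -nullPotential m s) ((2 * x - 6 * m) / x ^ 4) x := fun x hx =>
    (hasDerivAt_nullPotential m (by linarith [hx.1] : x ≠ 0)).neg.congr_deriv (by ring)
  have hmvt := (convex_Icc a r).mul_sub_le_image_sub_of_le_deriv
    (fun x hx => (hderiv x hx).continuousAt.continuousWithinAt)
    (fun x hx => (hderiv x (interior_subset hx)).differentiableAt.differentiableWithinAt)
    (C := 2 * (a - 3 * m) / r ^ 4) (fun x hx => ?_)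
    a (left_mem_Icc.2 har) r (right_mem_Icc.2 har) har
  · linarith
  · rw [interior_Icc] at hx
    rw [(hderiv x (Ioo_subset_Icc_self hx)).deriv]
    exact div_le_div₀ (by linarith [hx.1]) (by linarith [hx.1]) (pow_pos (by linarith [hx.1]) 4)
      (pow_le_pow_left₀ (by linarith [hx.1]) hx.2.le 4)

lemma nullPotential_sub_pos (hm : 0 < m) (ha : 3 * m ≤ a) (har : a < r) :
    0 < nullPotential m a - nullPotential m r :=
  sub_pos.2 (strictAntiOn_nullPotential hm ha (ha.trans har.le) har)

lemma deflectionIntegrand_nonneg : 0 ≤ deflectionIntegrand m a r := by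
  unfold deflectionIntegrand
  positivity

lemma continuousOn_deflectionIntegrand (hm : 0 < m) (ha : 3 * m ≤ a) :
    ContinuousOn (deflectionIntegrand m a) (Ioi a) := by
  intro r (hr : a < r)
  have hr0 : 0 < r := by linarith
  have hF := (hasDerivAt_nullPotential m hr0.ne').continuousAt
  refine (continuousAt_const.div ((continuousAt_id.pow 2).mul (continuousAt_const.sub hF).sqrt)
    ?_).continuousWithinAt
  exact (mul_pos (pow_pos hr0 2) (Real.sqrt_pos.2 (nullPotential_sub_pos hm ha hr))).ne'

lemma deflectionIntegrand_le_rpow (hm : 0 < m) (ha : 3 * m < a) {R : ℝ} (hr : r ∈ Ioc a R) :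
    deflectionIntegrand m a r ≤
      (a ^ 2 * √(2 * (a - 3 * m) / R ^ 4))⁻¹ * (r - a) ^ (-(1 / 2) : ℝ) := by
  obtain ⟨har, hrR⟩ := hr
  have hr0 : 0 < r := by linarith
  have hc : 0 < 2 * (a - 3 * m) / R ^ 4 := by
    have : 0 < R := by linarith
    positivity
  have hlin : 2 * (a - 3 * m) / R ^ 4 * (r - a) ≤ nullPotential m a - nullPotential m r := by
    refine le_trans ?_ (mul_sub_le_nullPotential_sub hm ha.le har.le)
    gcongr
  rw [Real.rpow_neg (by linarith), ← Real.sqrt_eq_rpow, deflectionIntegrand, one_div, ← mul_inv]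
  refine inv_anti₀ (mul_pos (mul_pos (pow_pos (by linarith) 2) (Real.sqrt_pos.2 hc))
    (Real.sqrt_pos.2 (sub_pos.2 har))) ?_
  calc a ^ 2 * √(2 * (a - 3 * m) / R ^ 4) * √(r - a)
      = a ^ 2 * √(2 * (a - 3 * m) / R ^ 4 * (r - a)) := by rw [mul_assoc, Real.sqrt_mul hc.le]
    _ ≤ r ^ 2 * √(nullPotential m a - nullPotential m r) := by
      gcongr
      linarith

lemma integrableOn_deflectionIntegrand_Ioc (hm : 0 < m) (ha : 3 * m < a) (R : ℝ) :
    IntegrableOn (deflectionIntegrand m a) (Ioc a R) := by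
  have hsing : IntegrableOn (fun r => (r - a) ^ (-(1 / 2) : ℝ)) (Ioc a R) := by
    have h := (intervalIntegral.intervalIntegrable_rpow' (a := 0) (b := R - a)
      (by norm_num : (-1 : ℝ) < -(1 / 2))).comp_sub_right a
    rw [zero_add, sub_add_cancel] at h
    exact h.1
  refine (hsing.const_mul (a ^ 2 * √(2 * (a - 3 * m) / R ^ 4))⁻¹).mono'
    ((continuousOn_deflectionIntegrand hm ha.le).mono Ioc_subset_Ioi_self
      |>.aestronglyMeasurable measurableSet_Ioc) ?_
  refine (ae_restrict_iff' measurableSet_Ioc).2 (ae_of_all _ fun r hr => ?_)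
  rw [Real.norm_of_nonneg deflectionIntegrand_nonneg]
  exact deflectionIntegrand_le_rpow hm ha hr

lemma integrableOn_deflectionIntegrand_Ioi (hm : 0 < m) (ha : 3 * m ≤ a) {R : ℝ} (haR : a < R) :
    IntegrableOn (deflectionIntegrand m a) (Ioi R) := by
  set c := nullPotential m a - nullPotential m R
  have hc : 0 < c := nullPotential_sub_pos hm ha haR
  refine ((integrableOn_Ioi_rpow_of_lt (by norm_num : (-2 : ℝ) < -1) (by linarith)).const_mul
    (√c)⁻¹).mono' ((continuousOn_deflectionIntegrand hm ha).mono (Ioi_subset_Ioi haR.le)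
    |>.aestronglyMeasurable measurableSet_Ioi) ?_
  refine (ae_restrict_iff' measurableSet_Ioi).2 (ae_of_all _ fun r (hr : R < r) => ?_)
  have hr0 : 0 < r := by linarith
  have hcr : c ≤ nullPotential m a - nullPotential m r :=
    sub_le_sub_left ((strictAntiOn_nullPotential hm).antitoneOn (ha.trans haR.le)
      (show 3 * m ≤ r by linarith) hr.le) _
  rw [Real.norm_of_nonneg deflectionIntegrand_nonneg, deflectionIntegrand, Real.rpow_neg hr0.le,
    Real.rpow_two, one_div, ← mul_inv, mul_comm]
  exact inv_anti₀ (by positivity) (by gcongr)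

lemma integrableOn_deflectionIntegrand (hm : 0 < m) (ha : 3 * m < a) :
    IntegrableOn (deflectionIntegrand m a) (Ioi a) := by
  rw [← Ioc_union_Ioi_eq_Ioi (lt_add_one a).le]
  exact (integrableOn_deflectionIntegrand_Ioc hm ha _).union
    (integrableOn_deflectionIntegrand_Ioi hm ha.le (lt_add_one a))

lemma inv_sub_le_deflectionIntegrand (hm : 0 < m) (ha : 3 * m ≤ a) (har : a < r)
    (hr : r ≤ 4 * m) : 9 / 16 * (r - 3 * m)⁻¹ ≤ deflectionIntegrand m a r := by
  have hr3 : 0 < r - 3 * m := by linarith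
  have hsqrt : √(nullPotential m a - nullPotential m r) ≤ (r - 3 * m) / (9 * m ^ 2) := by
    refine Real.sqrt_le_iff.2 ⟨by positivity, ?_⟩
    calc nullPotential m a - nullPotential m r ≤ (r - 3 * m) ^ 2 / (81 * m ^ 4) :=
          nullPotential_sub_le hm ha har.le
      _ = ((r - 3 * m) / (9 * m ^ 2)) ^ 2 := by ring
  have hden : r ^ 2 * √(nullPotential m a - nullPotential m r) ≤ 16 / 9 * (r - 3 * m) :=
    calc r ^ 2 * √(nullPotential m a - nullPotential m r)
        ≤ (4 * m) ^ 2 * ((r - 3 * m) / (9 * m ^ 2)) := by gcongr; linarith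
      _ = 16 / 9 * (r - 3 * m) := by field_simp; ring
  have hpos : 0 < r ^ 2 * √(nullPotential m a - nullPotential m r) :=
    mul_pos (pow_pos (by linarith) 2) (Real.sqrt_pos.2 (nullPotential_sub_pos hm ha har))
  calc 9 / 16 * (r - 3 * m)⁻¹ = (16 / 9 * (r - 3 * m))⁻¹ := by rw [mul_inv]; norm_num
    _ ≤ deflectionIntegrand m a r := by
      rw [deflectionIntegrand, one_div]
      exact inv_anti₀ hpos hden

lemma log_le_integral_deflectionIntegrand (hm : 0 < m) (ha : 3 * m < a) (ha4 : a ≤ 4 * m) :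
    9 / 16 * Real.log (m / (a - 3 * m)) ≤ ∫ r in Ioi a, deflectionIntegrand m a r := by
  have hinv : IntegrableOn (fun r => 9 / 16 * (r - 3 * m)⁻¹) (Ioc a (4 * m)) := by
    refine (ContinuousOn.integrableOn_Icc ?_).mono_set Ioc_subset_Icc_self
    exact continuousOn_const.mul ((continuousOn_id.sub continuousOn_const).inv₀
      fun r hr => (sub_pos.2 (ha.trans_le hr.1)).ne')
  have hint := integrableOn_deflectionIntegrand hm ha
  calc 9 / 16 * Real.log (m / (a - 3 * m))
      = ∫ r in Ioc a (4 * m), 9 / 16 * (r - 3 * m)⁻¹ := by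
        rw [← intervalIntegral.integral_of_le ha4, intervalIntegral.integral_const_mul,
          intervalIntegral.integral_comp_sub_right (fun x => x⁻¹),
          integral_inv_of_pos (by linarith) (by linarith), show 4 * m - 3 * m = m by ring]
    _ ≤ ∫ r in Ioc a (4 * m), deflectionIntegrand m a r :=
        setIntegral_mono_on hinv (hint.mono_set Ioc_subset_Ioi_self) measurableSet_Ioc
          fun r hr => inv_sub_le_deflectionIntegrand hm ha.le hr.1 hr.2
    _ ≤ ∫ r in Ioi a, deflectionIntegrand m a r :=
        setIntegral_mono_set hint (ae_of_all _ fun _ => deflectionIntegrand_nonneg)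
          Ioc_subset_Ioi_self.eventuallyLE

lemma tendsto_integral_deflectionIntegrand (hm : 0 < m) :
    Tendsto (fun a => ∫ r in Ioi a, deflectionIntegrand m a r) (𝓝[>] (3 * m)) atTop := by
  have hshift : Tendsto (fun a => a - 3 * m) (𝓝[>] (3 * m)) (𝓝[>] 0) := by
    refine tendsto_nhdsWithin_iff.2
      ⟨?_, eventually_nhdsWithin_of_forall fun a ha => mem_Ioi.2 (sub_pos.2 ha)⟩
    simpa using ((continuous_sub_right (3 * m)).tendsto (3 * m)).mono_left nhdsWithin_le_nhds
  have hlog : Tendsto (fun a => 9 / 16 * Real.log (m / (a - 3 * m))) (𝓝[>] (3 * m)) atTop := by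
    simp only [div_eq_mul_inv m]
    exact (Real.tendsto_log_atTop.comp
      ((tendsto_inv_nhdsGT_zero.comp hshift).const_mul_atTop hm)).const_mul_atTop (by norm_num)
  refine tendsto_atTop_mono' _ ?_ hlog
  filter_upwards [Ioo_mem_nhdsGT (show 3 * m < 4 * m by linarith)] with a ha
  exact log_le_integral_deflectionIntegrand hm ha.1 ha.2.le

end

/-- Strong-deflection divergence: the total azimuthal angle
`Δφ(b) = 2∫_{r_p(b)}^{∞} dr/(r²√(1/b² - f(r)))` diverges as the impact
parameter approaches the critical value `3√3·m` from above: for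
`0 < b - 3√3·m ≪ m` the massless particle circles the unstable circular
orbit many times before flying back to infinity. -/
theorem schwarzschild_strong_deflection_divergence
    (m : ℝ) (hm : 0 < m) (f : ℝ → ℝ)
    (hf : ∀ r : ℝ, f r = (1 - 2 * m / r) / r ^ 2)
    (rp : ℝ → ℝ)
    (hrp : ∀ b : ℝ, 3 * Real.sqrt 3 * m < b →
      rp b ∈ Set.Ioi (3 * m) ∧ f (rp b) = 1 / b ^ 2)
    (Δφ : ℝ → ℝ)
    (hΔφ : ∀ b : ℝ, 3 * Real.sqrt 3 * m < b →
      Δφ b = 2 * ∫ r in Set.Ioi (rp b), 1 / (r ^ 2 * Real.sqrt (1 / b ^ 2 - f r))) :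
    ∀ M : ℝ, ∃ δ > 0, ∀ b : ℝ,
      3 * Real.sqrt 3 * m < b → b < 3 * Real.sqrt 3 * m + δ → M < Δφ b := by
  intro M
  set bc := 3 * √3 * m
  obtain rfl : f = nullPotential m := funext hf
  have hbc : bc ≠ 0 := by positivity
  have hrp_tendsto : Tendsto rp (𝓝[>] bc) (𝓝[>] (3 * m)) := by
    refine tendsto_nhdsWithin_iff.2
      ⟨?_, eventually_nhdsWithin_of_forall fun b hb => (hrp b hb).1⟩
    refine (strictAntiOn_nullPotential hm).tendsto_of_tendsto_comp
      (eventually_nhdsWithin_of_forall fun b hb => (hrp b hb).1.le) ?_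
    rw [nullPotential_three_mul hm.ne']
    exact (tendsto_nhdsWithin_of_tendsto_nhds (continuousAt_const.div (continuousAt_id.pow 2)
      (pow_ne_zero 2 hbc))).congr' (eventually_nhdsWithin_of_forall fun b hb => (hrp b hb).2.symm)
  have hΔφ_tendsto : Tendsto Δφ (𝓝[>] bc) atTop := by
    refine ((tendsto_integral_deflectionIntegrand hm).comp hrp_tendsto).const_mul_atTop two_pos
      |>.congr' (eventually_nhdsWithin_of_forall fun b hb => ?_)
    rw [hΔφ b hb, ← (hrp b hb).2]
    rfl
  obtain ⟨u, hu, hM⟩ := (nhdsGT_basis bc).eventually_iff.1 (hΔφ_tendsto.eventually_gt_atTop M)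
  exact ⟨u - bc, by linarith, fun b hb hbu => hM ⟨hb, by linarith⟩⟩
end

section
/- Let m > 0, f(r) = (1 - 2m/r)/r² for r > 2m, and consider a null geodesic with the critical impact parameter b = 3√3·m. Let r : [0, ∞) → ℝ be a differentiable function with r(λ) > 2m for all λ, satisfying the ingoing radial equation r'(λ) = -√(1/(27m²) - f(r(λ))) and r(0) = r₀ for some r₀ > 3m. Then r(λ) > 3m for all λ ≥ 0, r is strictly decreasing, r(λ) → 3m as λ → ∞, and the total azimuthal angle diverges: ∫_{0}^{∞} r(λ)^{-2} dλ = ∞. That is, a null geodesic with critical impact parameter spirals inward, winding infinitely many times while asymptotically approaching the photon sphere r = 3m without ever reaching it. -/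
/-! The radial equation reads `r' = -g(r)` with `g(s)² = 1/(27m²) - f(s)`, and the critical
impact parameter makes `s = 3m` a double root: `g(s)² = (s - 3m)² (s + 6m) / (27 m² s³)`.
So `g` vanishes only linearly at the photon sphere, which a comparison with an exponential
shows cannot be reached in finite affine time; as `g > 0` above it, `r` decreases, and it
cannot stop above `3m` because `g` is bounded below away from `3m`. Since `r` stays in
`(3m, r₀]`, the integrand `r⁻²` is bounded below and the azimuthal angle diverges. -/

open Filter MeasureTheory Set

noncomputable section

def schwarzschildNullPotential (m s : ℝ) : ℝ := (1 - 2 * m / s) / s ^ 2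

def criticalRadialSpeed (m s : ℝ) : ℝ := √(1 / (27 * m ^ 2) - schwarzschildNullPotential m s)

theorem one_div_sub_schwarzschildNullPotential {m s : ℝ} (hm : m ≠ 0) (hs : s ≠ 0) :
    1 / (27 * m ^ 2) - schwarzschildNullPotential m s =
      (s - 3 * m) ^ 2 * (s + 6 * m) / (27 * m ^ 2 * s ^ 3) := by
  unfold schwarzschildNullPotential
  field_simp
  ring

theorem criticalRadialSpeed_le {m s : ℝ} (hm : 0 < m) (hs : 3 * m ≤ s) :
    criticalRadialSpeed m s ≤ (s - 3 * m) / (9 * m ^ 2) := by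
  have hs₀ : 0 < s := by linarith
  have hcube : 3 * m ^ 2 * (s + 6 * m) ≤ s ^ 3 := by
    nlinarith [mul_nonneg (sub_nonneg.2 hs) (by positivity : 0 ≤ s ^ 2 + 3 * m * s + 6 * m ^ 2)]
  rw [criticalRadialSpeed, Real.sqrt_le_left (by have := sub_nonneg.2 hs; positivity),
    one_div_sub_schwarzschildNullPotential hm.ne' hs₀.ne', div_pow, div_le_div_iff₀ (by positivity)
      (by positivity)]
  calc (s - 3 * m) ^ 2 * (s + 6 * m) * (9 * m ^ 2) ^ 2
      = (s - 3 * m) ^ 2 * (27 * m ^ 2 * (3 * m ^ 2 * (s + 6 * m))) := by ring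
    _ ≤ (s - 3 * m) ^ 2 * (27 * m ^ 2 * s ^ 3) := by gcongr

theorem div_le_criticalRadialSpeed {m s : ℝ} (hm : 0 < m) (hs : 3 * m ≤ s) :
    (s - 3 * m) / (6 * m * s) ≤ criticalRadialSpeed m s := by
  have hs₀ : 0 < s := by linarith
  apply Real.le_sqrt_of_sq_le
  rw [one_div_sub_schwarzschildNullPotential hm.ne' hs₀.ne', div_pow, div_le_div_iff₀ (by positivity)
      (by positivity)]
  have hcube : 27 * m ^ 2 * s ^ 3 ≤ 36 * m ^ 2 * s ^ 2 * (s + 6 * m) := by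
    nlinarith [mul_le_mul_of_nonneg_left (by linarith : 27 * s ≤ 36 * (s + 6 * m))
      (by positivity : 0 ≤ m ^ 2 * s ^ 2)]
  calc (s - 3 * m) ^ 2 * (27 * m ^ 2 * s ^ 3)
      ≤ (s - 3 * m) ^ 2 * (36 * m ^ 2 * s ^ 2 * (s + 6 * m)) := by gcongr
    _ = (s - 3 * m) ^ 2 * (s + 6 * m) * (6 * m * s) ^ 2 := by ring

theorem criticalRadialSpeed_pos {m s : ℝ} (hm : 0 < m) (hs : 3 * m < s) :
    0 < criticalRadialSpeed m s :=
  (div_pos (by linarith) (by nlinarith)).trans_le (div_le_criticalRadialSpeed hm hs.le)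

section RadialEquation

variable {r g : ℝ → ℝ} (hode : ∀ l, 0 ≤ l → HasDerivAt r (-g (r l)) l)
include hode

theorem continuousOn_Ici_of_hasDerivAt_neg : ContinuousOn r (Ici 0) :=
  fun l hl => (hode l hl).continuousAt.continuousWithinAt

theorem strictAntiOn_Ici_of_hasDerivAt_neg (hg : ∀ l, 0 ≤ l → 0 < g (r l)) :
    StrictAntiOn r (Ici 0) :=
  strictAntiOn_of_hasDerivWithinAt_neg (convex_Ici 0) (continuousOn_Ici_of_hasDerivAt_neg hode)
    (fun l hl => (hode l (interior_subset hl)).hasDerivWithinAt)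
    (fun l hl => neg_neg_of_pos (hg l (interior_subset hl)))

/-- Comparison with `a + (r 0 - a) e^{-(C + 1) l}`, which is strictly steeper than `r` wherever
the two meet. -/
theorem lt_of_hasDerivAt_neg_of_le_mul_sub {a C : ℝ} (ha : a < r 0)
    (hg : ∀ s, a < s → g s ≤ C * (s - a)) (l : ℝ) (hl : 0 ≤ l) : a < r l := by
  set B : ℝ → ℝ := fun t => a + (r 0 - a) * Real.exp (-(C + 1) * t)
  have hB_sub : ∀ t, 0 < B t - a := fun t => by
    simpa only [B, add_sub_cancel_left] using mul_pos (sub_pos.2 ha) (Real.exp_pos _)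
  have hB : ∀ t, HasDerivAt B (-(C + 1) * (B t - a)) t := by
    intro t
    refine (((hasDerivAt_id t).const_mul (-(C + 1))).exp.const_mul (r 0 - a)).const_add a
      |>.congr_deriv ?_
    simp only [B, id]
    ring
  have hBr : B l ≤ r l := by
    refine image_le_of_deriv_right_lt_deriv_boundary'
      (fun t _ => (hB t).continuousAt.continuousWithinAt)
      (fun t _ => (hB t).hasDerivWithinAt) (by simp [B])
      ((continuousOn_Ici_of_hasDerivAt_neg hode).mono Icc_subset_Ici_self)
      (fun t ht => (hode t ht.1).hasDerivWithinAt) ?_ ⟨hl, le_rfl⟩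
    intro t _ hBt
    rw [← hBt]
    nlinarith [hg (B t) (by linarith [hB_sub t]), hB_sub t]
  linarith [hB_sub l]

theorem tendsto_of_hasDerivAt_neg_of_le {a : ℝ} (hanti : AntitoneOn r (Ici 0))
    (hlow : ∀ l, 0 ≤ l → a ≤ r l) (hg : ∀ ε > 0, ∃ δ > 0, ∀ s, a + ε ≤ s → s ≤ r 0 → δ ≤ g s) :
    Tendsto r atTop (nhds a) := by
  refine tendsto_order.2 ⟨fun a' ha' => ?_, fun a' ha' => ?_⟩
  · filter_upwards [eventually_ge_atTop 0] with l hl using ha'.trans_le (hlow l hl)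
  obtain ⟨δ, hδ, hgδ⟩ := hg (a' - a) (sub_pos.2 ha')
  filter_upwards [eventually_ge_atTop 0, eventually_gt_atTop ((r 0 - a) / δ)] with l hl hlδ
  by_contra! hrl
  have hdecay : r l ≤ r 0 - δ * l := by
    refine image_le_of_deriv_right_le_deriv_boundary
      ((continuousOn_Ici_of_hasDerivAt_neg hode).mono Icc_subset_Ici_self)
      (fun t ht => (hode t ht.1).hasDerivWithinAt) (by simp) (by fun_prop)
      (fun t _ => ((hasDerivAt_id t).const_mul δ).const_sub (r 0) |>.hasDerivWithinAt) ?_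
      ⟨hl, le_rfl⟩
    intro t ht
    have hrt : r l ≤ r t := hanti ht.1 hl ht.2.le
    have hrt₀ : r t ≤ r 0 := hanti self_mem_Ici ht.1 ht.1
    simpa using hgδ (r t) (by linarith) hrt₀
  have hδl := (div_lt_iff₀' hδ).1 hlδ
  linarith [hlow l hl]

end RadialEquation

theorem setLIntegral_ofReal_eq_top_of_le {α : Type*} [MeasurableSpace α] {μ : Measure α}
    {s : Set α} {f : α → ℝ} {c : ℝ} (hs : MeasurableSet s) (hμ : μ s = ⊤) (hc : 0 < c)
    (hf : ∀ x ∈ s, c ≤ f x) : ∫⁻ x in s, ENNReal.ofReal (f x) ∂μ = ⊤ :=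
  top_unique <| calc
    ⊤ = ENNReal.ofReal c * μ s := by rw [hμ, ENNReal.mul_top (ENNReal.ofReal_pos.2 hc).ne']
    _ = ∫⁻ _ in s, ENNReal.ofReal c ∂μ := (setLIntegral_const s _).symm
    _ ≤ ∫⁻ x in s, ENNReal.ofReal (f x) ∂μ :=
      setLIntegral_mono' hs fun x hx => ENNReal.ofReal_le_ofReal (hf x hx)

end

theorem schwarzschild_critical_spiral_general
    (m : ℝ) (hm : 0 < m) (f : ℝ → ℝ)
    (hf : ∀ s : ℝ, f s = (1 - 2 * m / s) / s ^ 2)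
    (r : ℝ → ℝ) (r₀ : ℝ) (hr₀ : 3 * m < r₀) (h0 : r 0 = r₀)
    (hode : ∀ l : ℝ, 0 ≤ l →
      HasDerivAt r (-Real.sqrt (1 / (27 * m ^ 2) - f (r l))) l) :
    (∀ l : ℝ, 0 ≤ l → 3 * m < r l) ∧
    StrictAntiOn r (Set.Ici 0) ∧
    Tendsto r atTop (nhds (3 * m)) ∧
    ∫⁻ l in Set.Ioi (0 : ℝ), ENNReal.ofReal (1 / (r l) ^ 2) = ⊤ := by
  obtain rfl : f = schwarzschildNullPotential m := funext hf
  subst h0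
  have hr₀_pos : 0 < r 0 := by linarith
  have hode' : ∀ l, 0 ≤ l → HasDerivAt r (-criticalRadialSpeed m (r l)) l := hode
  have habove : ∀ l, 0 ≤ l → 3 * m < r l :=
    lt_of_hasDerivAt_neg_of_le_mul_sub hode' hr₀ (C := 1 / (9 * m ^ 2)) fun s hs => by
      rw [one_div_mul_eq_div]; exact criticalRadialSpeed_le hm hs.le
  have hanti : StrictAntiOn r (Ici 0) :=
    strictAntiOn_Ici_of_hasDerivAt_neg hode' fun l hl => criticalRadialSpeed_pos hm (habove l hl)
  have hlim : Tendsto r atTop (nhds (3 * m)) := by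
    refine tendsto_of_hasDerivAt_neg_of_le hode' hanti.antitoneOn (fun l hl => (habove l hl).le)
      fun ε hε => ⟨ε / (6 * m * r 0), by positivity, fun s hε_le hs_le => ?_⟩
    have hs : 0 < s := by linarith
    refine le_trans ?_ (div_le_criticalRadialSpeed hm (by linarith))
    gcongr <;> linarith
  refine ⟨habove, hanti, hlim, setLIntegral_ofReal_eq_top_of_le measurableSet_Ioi Real.volume_Ioi
    (c := 1 / r 0 ^ 2) (by positivity) fun l hl => ?_⟩
  have hl : 0 ≤ l := le_of_lt hl
  have hrl : 0 < r l := by linarith [habove l hl]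
  gcongr
  exact hanti.antitoneOn self_mem_Ici hl hl

/-- A null geodesic with the critical impact parameter `b = 3√3·m`, starting
at `r₀ > 3m` and obeying the ingoing radial equation
`r'(λ) = -√(1/(27m²) - f(r(λ)))`, stays above the photon sphere, is strictly
decreasing, asymptotically approaches `r = 3m` as `λ → ∞`, and its total
azimuthal angle `∫₀^∞ r(λ)⁻² dλ` diverges: it spirals inward, winding
infinitely many times while never reaching the photon sphere. -/
theorem schwarzschild_critical_spiral
    (m : ℝ) (hm : 0 < m) (f : ℝ → ℝ)
    (hf : ∀ s : ℝ, f s = (1 - 2 * m / s) / s ^ 2)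
    (r : ℝ → ℝ) (r₀ : ℝ) (hr₀ : 3 * m < r₀) (h0 : r 0 = r₀)
    (hpos : ∀ l : ℝ, 0 ≤ l → 2 * m < r l)
    (hode : ∀ l : ℝ, 0 ≤ l →
      HasDerivAt r (-Real.sqrt (1 / (27 * m ^ 2) - f (r l))) l) :
    (∀ l : ℝ, 0 ≤ l → 3 * m < r l) ∧
    StrictAntiOn r (Set.Ici 0) ∧
    Tendsto r atTop (nhds (3 * m)) ∧
    ∫⁻ l in Set.Ioi (0 : ℝ), ENNReal.ofReal (1 / (r l) ^ 2) = ⊤ :=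
  schwarzschild_critical_spiral_general m hm f hf r r₀ hr₀ h0 hode
end
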